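/- arXiv:1211.5389 — 5 statements merged into one kernel-verified Lean document; each statement's English description precedes it below -/
import Mathlib

section
/- For every n divisible by σ, the word w = (a₁a₂⋯a_σ)^{n/σ} over an alphabet of σ letters has Abelian period (h,p) for every p with p ≡ 0 (mod σ), p ≤ n, and every h with 0 ≤ h ≤ min(p-1, n-p). Consequently w has Θ(n²) distinct Abelian periods. -/
/-!
Every factor of length `q * |l|` of a power `l ^ m` is a concatenation of `q` rotations of `l`,
so all factors of a fixed length `p` divisible by `|l|` have the same Parikh vector. Cutting the
word into a head of length `h < p`, blocks of length `p` and a short tail then exhibits the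
Abelian period `(h, p)`: the head is a prefix of the first factor of length `p`, the tail a suffix
of the last one. For the count, every `p = j * σ` with `2 * p ≤ n` comes with the `p` heads
`h < p`, and summing over `j ≤ m / 2` gives about `σ * m ^ 2 / 8` periods.
-/

/-- A word `w` has Abelian period `(h, p)` if `w = u₀u₁⋯u_{k-1}u_k` where `|u₀| = h`,
all the middle blocks `u₁, …, u_{k-1}` have length `p` and the same Parikh vector,
the Parikh vectors of the head `u₀` and the tail `u_k` are contained in that common
Parikh vector, `h < p`, there is at least one middle block, and the tail has length
`< p`. -/
def HasAbelianPeriod {α : Type*} [DecidableEq α] (w : List α) (h p : ℕ) : Prop :=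
  h < p ∧ ∃ (u0 : List α) (us : List (List α)) (uk : List α),
    w = u0 ++ us.flatten ++ uk ∧
    u0.length = h ∧
    us ≠ [] ∧
    (∀ u ∈ us, u.length = p) ∧
    (∀ u ∈ us, ∀ v ∈ us, ∀ a : α, u.count a = v.count a) ∧
    (∀ u ∈ us, ∀ a : α, u0.count a ≤ u.count a) ∧
    (∀ u ∈ us, ∀ a : α, uk.count a ≤ u.count a) ∧
    uk.length < p

namespace List

variable {α : Type*}

theorem getElem_flatten_replicate (l : List α) (m i : ℕ)
    (hi : i < (replicate m l).flatten.length) :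
    (replicate m l).flatten[i] =
      l[i % l.length]'(Nat.mod_lt _ (by cases l <;> simp_all)) := by
  induction m generalizing i with
  | zero => simp at hi
  | succ m ih =>
    simp only [replicate_succ, flatten_cons, getElem_append]
    split_ifs with h
    · simp only [Nat.mod_eq_of_lt h]
    · simp only [ih, Nat.mod_eq_sub_mod (not_lt.mp h)]

theorem take_drop_flatten_replicate_eq_rotate (l : List α) {m s : ℕ}
    (hs : s + l.length ≤ m * l.length) :
    ((replicate m l).flatten.drop s).take l.length = l.rotate s := by
  refine ext_getElem (by simp; lia) fun i _ _ => ?_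
  simp [getElem_flatten_replicate, Nat.add_comm i s]

theorem count_take_drop_flatten_replicate [BEq α] (l : List α) {m s q : ℕ}
    (hs : s + q * l.length ≤ m * l.length) (a : α) :
    (((replicate m l).flatten.drop s).take (q * l.length)).count a = q * l.count a := by
  induction q generalizing s with
  | zero => simp
  | succ q ih =>
    rw [Nat.succ_mul, Nat.add_comm, take_add, count_append,
      take_drop_flatten_replicate_eq_rotate l (by lia), (rotate_perm l s).count_eq, drop_drop,
      ih (by lia), Nat.succ_mul, Nat.add_comm]

theorem flatten_map_range_take_drop (w : List α) (s p k : ℕ) :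
    ((range k).map fun i => (w.drop (s + i * p)).take p).flatten = (w.drop s).take (k * p) := by
  induction k with
  | zero => simp
  | succ k ih =>
    rw [range_succ, map_append, flatten_append, ih, Nat.succ_mul, take_add, drop_drop]
    simp

end List

section AbelianPeriod

open List

variable {α : Type*} [DecidableEq α]

theorem HasAbelianPeriod.of_count_take_drop_eq {w : List α} {h p : ℕ} (c : α → ℕ)
    (hc : ∀ s, s + p ≤ w.length → ∀ a, ((w.drop s).take p).count a = c a)
    (hhp : h < p) (hpw : h + p ≤ w.length) : HasAbelianPeriod w h p := by
  set k := (w.length - h) / p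
  have hk : 1 ≤ k := (Nat.one_le_div_iff (by lia)).mpr (by lia)
  have hkp : h + k * p ≤ w.length := by have := Nat.div_mul_le_self (w.length - h) p; lia
  have htail : w.length - (h + k * p) < p := by
    have := Nat.div_add_mod' (w.length - h) p
    have := Nat.mod_lt (w.length - h) (by lia : 0 < p)
    lia
  set us := (range k).map fun i => (w.drop (h + i * p)).take p
  have hus : ∀ u ∈ us, u.length = p ∧ ∀ a, u.count a = c a := by
    simp only [us, mem_map, mem_range]
    rintro _ ⟨i, hi, rfl⟩
    have : h + i * p + p ≤ w.length := by nlinarith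
    exact ⟨by simp; lia, hc _ this⟩
  refine ⟨hhp, w.take h, us, w.drop (h + k * p), ?_, by simp; lia, by simp [us]; lia,
    fun u hu => (hus u hu).1, ?_, ?_, ?_, by simpa using htail⟩
  · rw [flatten_map_range_take_drop, append_assoc, ← drop_drop, take_append_drop,
      take_append_drop]
  · intro u hu v hv a
    rw [(hus u hu).2, (hus v hv).2]
  · intro u hu a
    rw [(hus u hu).2, ← hc 0 (by lia), drop_zero]
    exact (take_prefix_take_left hhp.le).sublist.count_le a
  · intro u hu a
    rw [(hus u hu).2, ← hc (w.length - p) (by lia), take_of_length_le (by simp; lia)]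
    exact (drop_sublist_drop_left w (by lia)).count_le a

theorem HasAbelianPeriod.le_length {w : List α} {h p : ℕ} (H : HasAbelianPeriod w h p) :
    p ≤ w.length := by
  obtain ⟨-, u0, us, uk, rfl, -, hne, hlen, -⟩ := H
  obtain ⟨u, hu⟩ := exists_mem_of_ne_nil us hne
  have := hlen u hu ▸ (sublist_flatten_of_mem hu).length_le
  simp only [length_append]
  lia

theorem finite_setOf_hasAbelianPeriod (w : List α) :
    {hp : ℕ × ℕ | HasAbelianPeriod w hp.1 hp.2}.Finite :=
  ((Set.finite_Iic w.length).prod (Set.finite_Iic w.length)).subset fun _ H =>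
    ⟨(H.1.trans_le H.le_length).le, H.le_length⟩

theorem hasAbelianPeriod_flatten_replicate (l : List α) {m h p : ℕ} (hlp : l.length ∣ p)
    (hhp : h < p) (hpm : h + p ≤ m * l.length) :
    HasAbelianPeriod (replicate m l).flatten h p := by
  obtain ⟨q, rfl⟩ := hlp
  refine .of_count_take_drop_eq (fun a => q * l.count a) (fun s hs a => ?_) hhp
    (by simpa using hpm)
  rw [mul_comm]
  exact count_take_drop_flatten_replicate l (by simp at hs; lia) a

theorem sum_range_le_ncard_setOf_hasAbelianPeriod (l : List α) {m t : ℕ} (ht : 2 * t ≤ m) :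
    ∑ j ∈ Finset.range (t + 1), j * l.length ≤
      {hp : ℕ × ℕ | HasAbelianPeriod (replicate m l).flatten hp.1 hp.2}.ncard := by
  set T := (Finset.range (t + 1)).sigma fun j => Finset.range (j * l.length)
  have hT : ∀ x ∈ (T : Set ((_ : ℕ) × ℕ)), x.1 ≤ t ∧ x.2 < x.1 * l.length := by
    rintro ⟨j, i⟩ hx
    simpa [T, Nat.lt_succ_iff] using hx
  have hmem : ∀ x ∈ (T : Set ((_ : ℕ) × ℕ)),
      (x.2, x.1 * l.length) ∈ {hp : ℕ × ℕ | HasAbelianPeriod (replicate m l).flatten hp.1 hp.2} :=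
    fun x hx => hasAbelianPeriod_flatten_replicate l (dvd_mul_left _ _) (hT x hx).2
      (by nlinarith [hT x hx])
  have hinj : Set.InjOn (fun x : (_ : ℕ) × ℕ => (x.2, x.1 * l.length)) T := by
    rintro ⟨j, i⟩ hx ⟨j', i'⟩ - he
    simp only [Prod.mk.injEq] at he
    obtain ⟨rfl, he⟩ := he
    rw [Nat.mul_right_cancel (Nat.pos_of_mul_pos_left (Nat.zero_lt_of_lt (hT _ hx).2)) he]
  calc ∑ j ∈ Finset.range (t + 1), j * l.length = T.card := by simp [T]
    _ = (T : Set ((_ : ℕ) × ℕ)).ncard := (Set.ncard_coe_finset T).symm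
    _ ≤ _ := Set.ncard_le_ncard_of_injOn _ hmem hinj (finite_setOf_hasAbelianPeriod _)

end AbelianPeriod

theorem abelian_periods_of_power_word_general (σ m n : ℕ) (hn : n = m * σ) :
    (∀ p, p % σ = 0 → 0 < p → p ≤ n → ∀ h, h ≤ min (p - 1) (n - p) →
      HasAbelianPeriod
        ((List.replicate m (List.ofFn (fun i : Fin σ => i))).flatten) h p) ∧
    (n - 2 * σ) ^ 2 ≤ 8 * σ *
      {hp : ℕ × ℕ | HasAbelianPeriod
        ((List.replicate m (List.ofFn (fun i : Fin σ => i))).flatten) hp.1 hp.2}.ncard := by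
  have hlen : (List.ofFn fun i : Fin σ => i).length = σ := List.length_ofFn
  refine ⟨fun p hp hp0 hpn h hh => ?_, ?_⟩
  · refine hasAbelianPeriod_flatten_replicate _ (hlen ▸ Nat.dvd_of_mod_eq_zero hp :) (by lia) ?_
    rw [hlen]
    lia
  · set t := m / 2
    have hcount := sum_range_le_ncard_setOf_hasAbelianPeriod (List.ofFn fun i : Fin σ => i)
      (show 2 * t ≤ m by lia)
    rw [hlen, ← Finset.sum_mul] at hcount
    have hgauss : (t + 1) * t = (∑ j ∈ Finset.range (t + 1), j) * 2 := by
      simpa using (Finset.sum_range_id_mul_two (t + 1)).symm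
    calc (n - 2 * σ) ^ 2 ≤ (2 * t * σ) ^ 2 := by
          rw [hn, ← Nat.sub_mul]
          gcongr
          lia
      _ = 4 * σ * (t * t * σ) := by ring
      _ ≤ 4 * σ * ((t + 1) * t * σ) := by gcongr; lia
      _ = 8 * σ * ((∑ j ∈ Finset.range (t + 1), j) * σ) := by rw [hgauss]; ring
      _ ≤ _ := by gcongr

/-- For every `n = m·σ` divisible by `σ`, the word
`w = (a₁a₂⋯a_σ)^{n/σ}` over the alphabet `Fin σ` has Abelian period `(h, p)` for every
`p ≡ 0 (mod σ)` with `0 < p ≤ n` and every `h` with `0 ≤ h ≤ min (p-1) (n-p)`.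
Consequently `w` has `Θ(n²)` distinct Abelian periods: the number of its Abelian
periods is at least `(n - 2σ)² / (8σ)`. -/
theorem abelian_periods_of_power_word (σ m n : ℕ) (hσ : 0 < σ) (hn : n = m * σ) :
    (∀ p, p % σ = 0 → 0 < p → p ≤ n → ∀ h, h ≤ min (p - 1) (n - p) →
      HasAbelianPeriod
        ((List.replicate m (List.ofFn (fun i : Fin σ => i))).flatten) h p) ∧
    (n - 2 * σ) ^ 2 ≤ 8 * σ *
      {hp : ℕ × ℕ | HasAbelianPeriod
        ((List.replicate m (List.ofFn (fun i : Fin σ => i))).flatten) hp.1 hp.2}.ncard :=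
  abelian_periods_of_power_word_general σ m n hn
end

section
/- Let w be a word of length n and 0 ≤ h ≤ ⌊(n-1)/2⌋. If there exists a letter a such that 2·|w[1..h]|_a > |w|_a, then for every h' ≥ h there also exists a letter b with 2·|w[1..h']|_b > |w|_b, and moreover h' cannot be the head length of any Abelian period of w. -/
/-!
If `(h, p)` is an Abelian period of `w`, the head `w[1..h]` and the first full block are disjoint
factors of `w`, and the block contains at least as many `a`'s as the head; hence
`2·|w[1..h]|_a ≤ |w|_a` for every letter `a`. A letter violating this inequality for `h` violates
it for every `h' ≥ h`, since prefix counts only grow.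
-/

lemma List.count_take_le_count_take {α : Type*} [DecidableEq α] (w : List α) (a : α) {h h' : ℕ}
    (hle : h ≤ h') : (w.take h).count a ≤ (w.take h').count a :=
  (List.take_prefix_take_left hle).sublist.count_le a

lemma HasAbelianPeriod.two_mul_count_take_le {α : Type*} [DecidableEq α] {w : List α} {h p : ℕ}
    (hw : HasAbelianPeriod w h p) (a : α) : 2 * (w.take h).count a ≤ w.count a := by
  obtain ⟨-, u0, us, uk, rfl, hlen, hne, -, -, hhead, -, -⟩ := hw
  obtain ⟨u, hu⟩ := List.exists_mem_of_ne_nil us hne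
  have htake : (u0 ++ us.flatten ++ uk).take h = u0 := by
    rw [List.append_assoc, List.take_left' hlen]
  have hblock : u0.count a ≤ us.flatten.count a :=
    (hhead u hu a).trans ((List.sublist_flatten_of_mem hu).count_le a)
  rw [htake, List.count_append, List.count_append]
  omega

theorem no_head_of_large_prefix_count_general {α : Type*} [DecidableEq α]
    (w : List α) (h : ℕ)
    (ha : ∃ a : α, w.count a < 2 * ((w.take h).count a)) :
    ∀ h', h ≤ h' →
      (∃ b : α, w.count b < 2 * ((w.take h').count b)) ∧
      (∀ p : ℕ, ¬ HasAbelianPeriod w h' p) := by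
  intro h' hle
  obtain ⟨a, ha⟩ := ha
  have hb : w.count a < 2 * (w.take h').count a :=
    ha.trans_le (Nat.mul_le_mul_left 2 (w.count_take_le_count_take a hle))
  exact ⟨⟨a, hb⟩, fun p hp => (hp.two_mul_count_take_le a).not_gt hb⟩

/-- Let `w` be a word of length `n` and `0 ≤ h ≤ ⌊(n-1)/2⌋`. If there
exists a letter `a` such that `2·|w[1..h]|_a > |w|_a`, then for every `h' ≥ h` there
also exists a letter `b` with `2·|w[1..h']|_b > |w|_b`, and moreover `h'` cannot be
the head length of any Abelian period of `w`. -/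
theorem no_head_of_large_prefix_count {α : Type*} [DecidableEq α]
    (w : List α) (n h : ℕ) (hn : w.length = n) (hh : h ≤ (n - 1) / 2)
    (ha : ∃ a : α, w.count a < 2 * ((w.take h).count a)) :
    ∀ h', h ≤ h' →
      (∃ b : α, w.count b < 2 * ((w.take h').count b)) ∧
      (∀ p : ℕ, ¬ HasAbelianPeriod w h' p) :=
  no_head_of_large_prefix_count_general w h ha
end

section
/- Let w be a word of length n and let G_w[h] be the maximum value j' - j over all pairs of positions h < j < j' ≤ n such that w[j] = w[j'] and no occurrence of the letter w[j] lies strictly between j and j'. If h < p < ⌊(G_w[h]+1)/2⌋, then (h,p) is not an Abelian period of w. -/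
theorem Nat.exists_mul_add_eq_of_lt_mul {x K p : ℕ} (hx : x < K * p) :
    ∃ k < K, ∃ t < p, k * p + t = x :=
  ⟨x / p, Nat.div_lt_of_lt_mul (by rwa [mul_comm]), x % p,
    Nat.mod_lt x (Nat.pos_of_mul_pos_left (Nat.zero_lt_of_lt hx)), Nat.div_add_mod' x p⟩

namespace List

variable {α : Type*} {us : List (List α)} {p : ℕ}

theorem length_flatten_of_forall_length_eq (hlen : ∀ u ∈ us, u.length = p) :
    us.flatten.length = us.length * p := by
  rw [length_flatten, map_congr_left hlen, map_const', sum_replicate, smul_eq_mul]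

theorem getElem?_flatten_mul_add {k t : ℕ} (hlen : ∀ u ∈ us, u.length = p)
    (hk : k < us.length) (ht : t < p) : us.flatten[k * p + t]? = us[k][t]? := by
  induction us generalizing k with
  | nil => simp at hk
  | cons u us ih =>
    have hu : u.length = p := hlen u mem_cons_self
    cases k with
    | zero => simp [getElem?_append_left (hu ▸ ht)]
    | succ k =>
      rw [flatten_cons, getElem?_append_right (by rw [hu, Nat.succ_mul]; omega), hu,
        Nat.succ_mul, show k * p + p + t - p = k * p + t by omega]
      exact ih (fun v hv => hlen v (mem_cons_of_mem u hv)) (by simpa using hk)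

theorem getElem?_append_flatten_append {k t : ℕ} (u0 uk : List α)
    (hlen : ∀ u ∈ us, u.length = p) (hk : k < us.length) (ht : t < p) :
    (u0 ++ us.flatten ++ uk)[u0.length + (k * p + t)]? = us[k][t]? := by
  have hkt : k * p + t < us.flatten.length := by
    rw [length_flatten_of_forall_length_eq hlen]
    nlinarith
  rw [getElem?_append_left (by simpa using hkt), getElem?_append_right (by omega),
    Nat.add_sub_cancel_left, getElem?_flatten_mul_add hlen hk ht]

end List

theorem HasAbelianPeriod.exists_getElem?_eq {α : Type*} [DecidableEq α] {w : List α}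
    {h p i : ℕ} (hw : HasAbelianPeriod w h p) (hi : h ≤ i) (hiw : i + 2 * p ≤ w.length) :
    ∃ m, i < m ∧ m < i + 2 * p ∧ w[m]? = w[i]? := by
  obtain ⟨-, u0, us, uk, rfl, rfl, -, hlen, hcount, -, -, huk⟩ := hw
  have hwlen : (u0 ++ us.flatten ++ uk).length = u0.length + us.length * p + uk.length := by
    simp only [List.length_append, List.length_flatten_of_forall_length_eq hlen]
  obtain ⟨k, hk, t, ht, hkt⟩ :=
    Nat.exists_mul_add_eq_of_lt_mul (x := i - u0.length) (K := us.length) (p := p) (by omega)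
  -- block `k'` is the first block starting after position `i`
  obtain ⟨k', hk', t', ht', hkt'⟩ :=
    Nat.exists_mul_add_eq_of_lt_mul (x := i - u0.length + p) (K := us.length) (p := p) (by omega)
  have hlet : i = u0.length + (k * p + t) := by omega
  obtain ⟨a, ha⟩ : ∃ a, us[k][t]? = some a :=
    ⟨_, List.getElem?_eq_getElem (by rw [hlen _ (List.getElem_mem hk)]; exact ht)⟩
  have ha' : a ∈ us[k'] :=
    (List.perm_iff_count.2 (hcount _ (List.getElem_mem hk) _ (List.getElem_mem hk'))).subset
      (List.mem_of_getElem? ha)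
  obtain ⟨s, hs', has⟩ := List.getElem_of_mem ha'
  have hs : s < p := hlen _ (List.getElem_mem hk') ▸ hs'
  refine ⟨u0.length + (k' * p + s), by omega, by omega, ?_⟩
  rw [List.getElem?_append_flatten_append u0 uk hlen hk' hs, hlet,
    List.getElem?_append_flatten_append u0 uk hlen hk ht, ha, List.getElem?_eq_getElem hs', has]

theorem not_abelian_period_of_lt_gap_general {α : Type*} [DecidableEq α]
    (w : List α) (n h p G : ℕ) (hn : w.length = n)
    (hG : ∃ j j' : ℕ, h < j ∧ j < j' ∧ j' ≤ n ∧
      w[j - 1]? = w[j' - 1]? ∧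
      (∀ m : ℕ, j < m → m < j' → w[m - 1]? ≠ w[j - 1]?) ∧
      j' - j = G)
    (hp2 : p < (G + 1) / 2) :
    ¬ HasAbelianPeriod w h p := by
  obtain ⟨j, j', hhj, hjj', hj'n, -, hno, rfl⟩ := hG
  intro hw
  obtain ⟨m, hjm, hmj', hm⟩ := hw.exists_getElem?_eq (i := j - 1) (by omega) (by omega)
  exact hno (m + 1) (by omega) (by omega) (by simpa using hm)

/-- Let `w` be a word of length `n` and let `G = G_w[h]` be the (maximum)
gap `j' - j` over pairs of positions `h < j < j' ≤ n` (1-indexed) with `w[j] = w[j']`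
and no occurrence of the letter `w[j]` strictly between `j` and `j'`. If
`h < p < ⌊(G+1)/2⌋`, then `(h, p)` is not an Abelian period of `w`.  (For the
conclusion it suffices that the gap `G` is realized by some such pair `j, j'`.) -/
theorem not_abelian_period_of_lt_gap {α : Type*} [DecidableEq α]
    (w : List α) (n h p G : ℕ) (hn : w.length = n)
    (hG : ∃ j j' : ℕ, h < j ∧ j < j' ∧ j' ≤ n ∧
      w[j - 1]? = w[j' - 1]? ∧
      (∀ m : ℕ, j < m → m < j' → w[m - 1]? ≠ w[j - 1]?) ∧
      j' - j = G)
    (hp1 : h < p) (hp2 : p < (G + 1) / 2) :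
    ¬ HasAbelianPeriod w h p :=
  not_abelian_period_of_lt_gap_general w n h p G hn hG hp2
end

section
/- Let w be a word of length n, let a be a letter, and suppose positions j < j' satisfy w[j] = w[j'] = a, h < j, j' ≤ n, and w contains no a strictly between positions j and j'. If j' - j > 2p and 0 ≤ h < p, then for k = min{k' : h + k'p ≥ j} one has h + (k+1)p < j' and the factor w[h+kp+1 .. h+(k+1)p] contains no occurrence of a; hence (h,p) is not an Abelian period of w. -/
private lemma flat_len {α : Type*} (l : List (List α)) (p : ℕ)
    (hl : ∀ u ∈ l, u.length = p) : l.flatten.length = l.length * p := by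
  induction l with
  | nil => simp
  | cons u t ih =>
    simp only [List.flatten_cons, List.length_append, List.length_cons]
    rw [hl u (by simp), ih (fun v hv => hl v (by simp [hv]))]
    ring

private lemma flat_get {α : Type*} (l : List (List α)) (p : ℕ)
    (hl : ∀ u ∈ l, u.length = p) (i t : ℕ) (hi : i < l.length) (ht : t < p) :
    l.flatten[i * p + t]? = (l[i]'hi)[t]? := by
  induction l generalizing i with
  | nil => simp at hi
  | cons u tl ih =>
    have hu : u.length = p := hl u (by simp)
    cases i with
    | zero =>
      simp only [List.flatten_cons]
      rw [List.getElem?_append_left (by omega)]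
      simp
    | succ i' =>
      simp only [List.flatten_cons]
      have hle : u.length ≤ (i' + 1) * p + t := by
        have : (i' + 1) * p = i' * p + p := by ring
        omega
      rw [List.getElem?_append_right hle]
      have he : (i' + 1) * p + t - u.length = i' * p + t := by
        have : (i' + 1) * p = i' * p + p := by ring
        omega
      rw [he]
      have := ih (fun v hv => hl v (by simp [hv])) i' (by simpa using hi)
      simpa using this



/-- Let `w` be a word of length `n`, `a` a letter, and `j < j'`
1-indexed positions with `w[j] = w[j'] = a`, `h < j`, `j' ≤ n`, and no `a` strictly
between positions `j` and `j'`. If `j' - j > 2p` and `0 ≤ h < p`, then for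
`k = min {k' | h + k'·p ≥ j}` one has `h + (k+1)·p < j'` and the factor
`w[h+kp+1 .. h+(k+1)p]` contains no occurrence of `a`; hence `(h, p)` is not an
Abelian period of `w`. -/

theorem gap_block_without_letter {α : Type*} [DecidableEq α]
    (w : List α) (n h p j j' k : ℕ) (a : α) (hn : w.length = n)
    (hja : w[j - 1]? = some a) (hj'a : w[j' - 1]? = some a)
    (hhj : h < j) (hjj' : j < j') (hj'n : j' ≤ n)
    (hbetween : ∀ m : ℕ, j < m → m < j' → w[m - 1]? ≠ some a)
    (hgap : 2 * p < j' - j) (hp : h < p)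
    (hk : j ≤ h + k * p) (hkmin : ∀ k' : ℕ, k' < k → h + k' * p < j) :
    h + (k + 1) * p < j' ∧
    (∀ m : ℕ, h + k * p + 1 ≤ m → m ≤ h + (k + 1) * p → w[m - 1]? ≠ some a) ∧
    ¬ HasAbelianPeriod w h p := by
  obtain ⟨k₀, rfl⟩ : ∃ k₀, k = k₀ + 1 := by
    cases k with
    | zero => exfalso; simp at hk; omega
    | succ m => exact ⟨m, rfl⟩
  have hk0 : h + k₀ * p < j := hkmin k₀ (by omega)
  have e1 : h + (k₀ + 1 + 1) * p = h + k₀ * p + 2 * p := by ring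
  have e2 : h + (k₀ + 1) * p = h + k₀ * p + p := by ring
  have part1 : h + (k₀ + 1 + 1) * p < j' := by omega
  have part2 : ∀ m : ℕ, h + (k₀ + 1) * p + 1 ≤ m → m ≤ h + (k₀ + 1 + 1) * p →
      w[m - 1]? ≠ some a := by
    intro m hm1 hm2
    exact hbetween m (by omega) (by omega)
  refine ⟨part1, part2, ?_⟩
  rintro ⟨hhp, u0, us, uk, hw, hu0, hne, hlen, hcnt, -, -, hukp⟩
  set K := us.length with hK
  have hfl : us.flatten.length = K * p := flat_len us p hlen
  have hwlen : n = h + K * p + uk.length := by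
    rw [← hn, hw]
    simp only [List.length_append, hfl, hu0]
  have hkK : k₀ + 1 + 1 ≤ K := by
    by_contra hc
    push_neg at hc
    have hKle : K * p ≤ (k₀ + 1) * p := Nat.mul_le_mul_right _ (by omega)
    omega
  have hget : ∀ i t : ℕ, (hi : i < K) → t < p → w[h + i * p + t]? = (us[i]'hi)[t]? := by
    intro i t hi ht
    have hipt : i * p + t < K * p := by
      calc i * p + t < i * p + p := by omega
        _ = (i + 1) * p := by ring
        _ ≤ K * p := Nat.mul_le_mul_right _ (by omega)
    rw [hw, List.append_assoc,
        List.getElem?_append_right (by omega : u0.length ≤ h + i * p + t)]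
    rw [hu0]
    have he : h + i * p + t - h = i * p + t := by omega
    rw [he, List.getElem?_append_left (by omega : i * p + t < us.flatten.length)]
    exact flat_get us p hlen i t hi ht
  -- a occurs in block k₀ (at position j)
  have hmem1 : a ∈ us[k₀]'(by omega) := by
    have ht0 : j - 1 - (h + k₀ * p) < p := by omega
    have := hget k₀ (j - 1 - (h + k₀ * p)) (by omega) ht0
    have hidx : h + k₀ * p + (j - 1 - (h + k₀ * p)) = j - 1 := by omega
    rw [hidx, hja] at this
    exact List.mem_of_getElem? this.symm
  -- a does not occur in block k₀+1
  have hmem2 : a ∉ us[k₀ + 1]'(by omega) := by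
    intro hmem
    obtain ⟨t, ht, hta⟩ := List.getElem_of_mem hmem
    have htp : t < p := by
      have := hlen (us[k₀ + 1]'(by omega)) (List.getElem_mem _)
      omega
    have hg := hget (k₀ + 1) t (by omega) htp
    rw [List.getElem?_eq_getElem ht, hta] at hg
    have : w[h + (k₀ + 1) * p + t + 1 - 1]? = some a := by
      simpa using hg
    exact part2 (h + (k₀ + 1) * p + t + 1) (by omega) (by omega) this
  have hc := hcnt (us[k₀]'(by omega)) (List.getElem_mem _)
    (us[k₀ + 1]'(by omega)) (List.getElem_mem _) a
  rw [List.count_eq_zero.mpr hmem2] at hc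
  exact absurd hc (by
    have := List.count_pos_iff.mpr hmem1
    omega)
end

section
/- Let w be a word of length n, H the Parikh vector of w[1..h], P the Parikh vector of w[h+1..h+p], and i = h + kp with k > 0 and p ≤ n - i, such that (h,p) is an Abelian period of w[1..i] with empty tail. Then (h,p) is an Abelian period of w[1..i+p] (with empty tail) if and only if for every letter a, the position of the (H[a] + (1 + ⌊i/p⌋)·P[a])-th occurrence of a in w exists and is at most i + p. -/
/-- A word `u` has Abelian period `(h, p)` **with empty tail** if `u = u₀u₁⋯u_k`
where `|u₀| = h`, all the blocks `u₁, …, u_k` (at least one) have length `p` and the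
same Parikh vector, and the Parikh vector of `u₀` is contained in that of `u₁`. -/
def HasAbelianPeriodEmptyTail {α : Type*} [DecidableEq α] (u : List α) (h p : ℕ) : Prop :=
  ∃ (u0 : List α) (us : List (List α)),
    u = u0 ++ us.flatten ∧
    u0.length = h ∧
    us ≠ [] ∧
    (∀ v ∈ us, v.length = p) ∧
    (∀ v ∈ us, ∀ v' ∈ us, ∀ a : α, v.count a = v'.count a) ∧
    (∀ v ∈ us, ∀ a : α, u0.count a ≤ v.count a)

/-!
When `h < p`, a word `u` with Abelian period `(h, p)` and empty tail consists of its head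
`u.take h` followed by `|u| / p` blocks, each with the Parikh vector `P` of the first block.
So `|w[1..i+p]|_a ≥ H[a] + (1 + ⌊i/p⌋)·P[a]` says exactly that the factor `c` of length `p`
following `w[1..i]` contains `P`. Since `c` also has length `p`, its Parikh vector is `P`,
and it can be appended to `w[1..i]` as one more block.
-/

section

variable {α : Type*} [DecidableEq α]

theorem sum_map_eq_length_mul_of_forall_eq {β : Type*} {l : List β} {f : β → ℕ} {c : ℕ}
    (h : ∀ x ∈ l, f x = c) : (l.map f).sum = l.length * c := by
  rw [List.map_congr_left h, List.map_const', List.sum_replicate, smul_eq_mul]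

theorem count_eq_of_count_le_of_length_le {l₁ l₂ : List α} (hle : ∀ a, l₁.count a ≤ l₂.count a)
    (hlen : l₂.length ≤ l₁.length) (a : α) : l₁.count a = l₂.count a :=
  ((List.subperm_ext_iff.2 fun x _ => hle x).perm_of_length_le hlen).count_eq a

namespace HasAbelianPeriodEmptyTail

variable {u : List α} {h p : ℕ}

theorem exists_blocks (hu : HasAbelianPeriodEmptyTail u h p) :
    ∃ us : List (List α), us ≠ [] ∧ u = u.take h ++ us.flatten ∧ (∀ v ∈ us, v.length = p) ∧
      (∀ v ∈ us, ∀ a, v.count a = ((u.drop h).take p).count a) ∧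
      ∀ a, (u.take h).count a ≤ ((u.drop h).take p).count a := by
  obtain ⟨u0, us, rfl, rfl, hne, hlen, hcnt, hsub⟩ := hu
  obtain ⟨b, rest, rfl⟩ := List.exists_cons_of_ne_nil hne
  have hb : b.length = p := hlen b List.mem_cons_self
  have hhead : (u0 ++ (b :: rest).flatten).take u0.length = u0 := by simp
  have hblock : ((u0 ++ (b :: rest).flatten).drop u0.length).take p = b := by subst hb; simp
  rw [hhead, hblock]
  exact ⟨b :: rest, hne, rfl, hlen, fun v hv a => hcnt v hv b List.mem_cons_self a,
    hsub b List.mem_cons_self⟩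

theorem add_le_length (hu : HasAbelianPeriodEmptyTail u h p) : h + p ≤ u.length := by
  obtain ⟨u0, us, rfl, rfl, hne, hlen, -⟩ := hu
  obtain ⟨b, rest, rfl⟩ := List.exists_cons_of_ne_nil hne
  simp [hlen b List.mem_cons_self]

theorem count_eq (hu : HasAbelianPeriodEmptyTail u h p) (hhp : h < p) (a : α) :
    u.count a = (u.take h).count a + u.length / p * ((u.drop h).take p).count a := by
  obtain ⟨us, -, hsplit, hlen, hcnt, -⟩ := hu.exists_blocks
  have hnum : u.length / p = us.length := by
    have hh : (u.take h).length = h := List.length_take_of_le (by grind [hu.add_le_length])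
    rw [hsplit, List.length_append, List.length_flatten, hh,
      sum_map_eq_length_mul_of_forall_eq hlen, Nat.add_mul_div_right _ _ (by omega),
      Nat.div_eq_of_lt hhp, zero_add]
  conv_lhs => rw [hsplit]
  rw [List.count_append, List.count_flatten, sum_map_eq_length_mul_of_forall_eq
    (fun v hv => hcnt v hv a), hnum]

theorem append (hu : HasAbelianPeriodEmptyTail u h p) {v : List α} (hv : v.length = p)
    (hvc : ∀ a, v.count a = ((u.drop h).take p).count a) :
    HasAbelianPeriodEmptyTail (u ++ v) h p := by
  obtain ⟨us, -, hsplit, hlen, hcnt, hsub⟩ := hu.exists_blocks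
  have hcnt' : ∀ x ∈ us ++ [v], ∀ a, x.count a = ((u.drop h).take p).count a := by
    simpa [or_imp, forall_and] using ⟨hcnt, hvc⟩
  refine ⟨u.take h, us ++ [v], ?_, ?_, by simp, ?_, ?_, ?_⟩
  · conv_lhs => rw [hsplit]
    simp
  · exact List.length_take_of_le (by grind [hu.add_le_length])
  · simpa [or_imp, forall_and] using ⟨hlen, hv⟩
  · intro x hx y hy a
    rw [hcnt' x hx a, hcnt' y hy a]
  · intro x hx a
    exact (hsub a).trans_eq (hcnt' x hx a).symm

end HasAbelianPeriodEmptyTail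

end

theorem abelian_period_extend_iff_select_general {α : Type*} [DecidableEq α]
    (w : List α) (n h p i : ℕ) (hn : w.length = n)
    (hhp : h < p) (hip : i + p ≤ n)
    (hper : HasAbelianPeriodEmptyTail (w.take i) h p) :
    HasAbelianPeriodEmptyTail (w.take (i + p)) h p ↔
      ∀ a : α,
        (w.take h).count a + (1 + i / p) * (((w.drop h).take p).count a) ≤
          (w.take (i + p)).count a := by
  have hhi : h + p ≤ i := by simpa [hn, (by omega : i ≤ n)] using hper.add_le_length
  have hhead : ∀ j, i ≤ j → (w.take j).take h = w.take h := fun j hj => by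
    rw [List.take_take, min_eq_left (by omega)]
  have hblock : ∀ j, i ≤ j → ((w.take j).drop h).take p = (w.drop h).take p := fun j hj => by
    rw [List.drop_take, List.take_take, min_eq_left (by omega)]
  have hcount := hper.count_eq hhp
  rw [hhead i le_rfl, hblock i le_rfl, List.length_take_of_le (by omega)] at hcount
  set c := (w.drop i).take p
  have hsplit : w.take (i + p) = w.take i ++ c := List.take_add
  constructor
  · intro hext a
    rw [hext.count_eq hhp a, hhead _ (by omega), hblock _ (by omega),
      List.length_take_of_le (by omega), Nat.add_div_right _ (by omega), add_comm 1]
  · intro hge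
    have hc : c.length = p := List.length_take_of_le (by rw [List.length_drop]; omega)
    have hP : ((w.drop h).take p).length = p :=
      List.length_take_of_le (by rw [List.length_drop]; omega)
    have hle : ∀ a, ((w.drop h).take p).count a ≤ c.count a := fun a => by
      have := hge a
      rw [hsplit, List.count_append, hcount a, add_mul, one_mul] at this
      omega
    have hPc := count_eq_of_count_le_of_length_le hle (hc.trans hP.symm).le
    rw [hsplit]
    refine hper.append hc fun a => ?_
    rw [hblock i le_rfl, hPc a]

/-- Let `w` be a word of length `n`, `H` the Parikh vector of `w[1..h]`,
`P` the Parikh vector of `w[h+1..h+p]`, and `i = h + kp` with `k > 0`, `h < p`, and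
`i + p ≤ n`, such that `(h, p)` is an Abelian period of `w[1..i]` with empty tail.
Then `(h, p)` is an Abelian period of `w[1..i+p]` with empty tail iff for every letter
`a` the `(H[a] + (1 + ⌊i/p⌋)·P[a])`-th occurrence of `a` in `w` exists and its position
is at most `i + p`; equivalently, the prefix of `w` of length `i + p` contains at least
`H[a] + (1 + ⌊i/p⌋)·P[a]` occurrences of `a`. -/
theorem abelian_period_extend_iff_select {α : Type*} [DecidableEq α]
    (w : List α) (n h p k i : ℕ) (hn : w.length = n)
    (hi : i = h + k * p) (hk : 0 < k) (hhp : h < p) (hip : i + p ≤ n)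
    (hper : HasAbelianPeriodEmptyTail (w.take i) h p) :
    HasAbelianPeriodEmptyTail (w.take (i + p)) h p ↔
      ∀ a : α,
        (w.take h).count a + (1 + i / p) * (((w.drop h).take p).count a) ≤
          (w.take (i + p)).count a :=
  abelian_period_extend_iff_select_general w n h p i hn hhp hip hper
end
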